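/- The sunny-side-up at 0 is sofic on the long range graph: there exist a finite colour set B, a tileset Θ ⊆ B × {t,u} × B and a map π : B → {0,1} such that the set of valid Θ-tilings τ : ℤ → B of the long range graph is non-empty and every valid Θ-tiling τ satisfies π(τ(n)) = 1 if and only if n = 0; that is, {π ∘ τ : τ a valid Θ-tiling} consists exactly of the indicator function of {0}. -/

import Mathlib

/-!  Common definitions for the long range graph. -/

/-- The two edge labels of the long range graph. -/
inductive LRLab : Type
  | t : LRLab
  | u : LRLab
deriving DecidableEq

instance : Primcodable LRLab :=
  Primcodable.ofEquiv Bool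
    { toFun := fun l => match l with | .t => false | .u => true
      invFun := fun b => match b with | false => .t | true => .u
      left_inv := by intro l; cases l <;> rfl
      right_inv := by intro b; cases b <;> rfl }

/-- A map `τ : ℤ → B` is a valid `Θ`-tiling of the long range graph if the two endpoint
colours of every labelled edge form a triple in `Θ`: there is a `t`-edge from `n` to `n+1`
for every `n`, a `u`-loop at `0`, and a `u`-edge from `n` to `n + 2^(v₂(n)+1)` for `n ≠ 0`. -/
def LRValid {B : Type} (Θ : Set (B × LRLab × B)) (τ : ℤ → B) : Prop :=
  (∀ n : ℤ, (τ n, LRLab.t, τ (n + 1)) ∈ Θ) ∧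
  (τ 0, LRLab.u, τ 0) ∈ Θ ∧
  ∀ n : ℤ, n ≠ 0 → (τ n, LRLab.u, τ (n + 2 ^ (padicValInt 2 n + 1))) ∈ Θ


/-!
The origin is the only vertex carrying a `u`-loop, so a tileset that forbids `u`-loops on every
colour with nonzero sign component pins the colour of `0`; the `t`-edges then propagate the
sign of `n` in both directions. Every other `u`-edge joins `n` to `n + 2 ^ k`, and `3 ∤ 2 ^ k`,
so recording `n mod 3` next to the sign makes these edges non-loops in the model tiling.
-/

def signSteps : Finset (SignType × SignType) := {(-1, -1), (-1, 0), (0, 1), (1, 1)}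

lemma eq_one_of_mem_signSteps {a b : SignType} (ha : a ≠ -1) (h : (a, b) ∈ signSteps) :
    b = 1 := by
  revert a b; decide

lemma eq_neg_one_of_mem_signSteps {a b : SignType} (hb : b ≠ 1) (h : (a, b) ∈ signSteps) :
    a = -1 := by
  revert a b; decide

lemma sign_mem_signSteps (n : ℤ) : (SignType.sign n, SignType.sign (n + 1)) ∈ signSteps := by
  rcases lt_trichotomy n 0 with h | rfl | h
  · rw [sign_neg h]
    rcases (by lia : n + 1 < 0 ∨ n + 1 = 0) with h' | h'
    · rw [sign_neg h']; decide
    · rw [h', sign_zero]; decide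
  · rw [zero_add, sign_zero, sign_one]; decide
  · rw [sign_pos h, sign_pos (by lia)]; decide

theorem eq_sign_of_mem_signSteps {s : ℤ → SignType} (h0 : s 0 = 0)
    (h : ∀ n, (s n, s (n + 1)) ∈ signSteps) (n : ℤ) : s n = SignType.sign n := by
  have nonneg : ∀ n, 0 ≤ n → s n ≠ -1 := by
    refine Int.leInduction (by simp [h0]) fun n _ ih => ?_
    simp [eq_one_of_mem_signSteps ih (h n)]
  have nonpos : ∀ n, n ≤ 0 → s n ≠ 1 := by
    refine Int.leInductionDown (by simp [h0]) fun n _ ih => ?_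
    have := h (n - 1)
    rw [sub_add_cancel] at this
    simp [eq_neg_one_of_mem_signSteps ih this]
  rcases lt_trichotomy n 0 with hn | rfl | hn
  · have := h n
    rw [sign_neg hn]
    exact eq_neg_one_of_mem_signSteps (nonpos (n + 1) (by lia)) this
  · simp [h0]
  · have := h (n - 1)
    rw [sub_add_cancel] at this
    rw [sign_pos hn]
    exact eq_one_of_mem_signSteps (nonneg (n - 1) (by lia)) this

lemma intCast_add_two_pow_ne_mod_three (n : ℤ) (k : ℕ) :
    ((n + 2 ^ k : ℤ) : ZMod 3) ≠ n := by
  push_cast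
  simpa using pow_ne_zero k (by decide : (2 : ZMod 3) ≠ 0)

def SunnyTile : SignType × ZMod 3 → LRLab → SignType × ZMod 3 → Prop
  | a, .t, b => (a.1, b.1) ∈ signSteps
  | a, .u, b => a = b → a.1 = 0

def sunnyTileset : Set ((SignType × ZMod 3) × LRLab × (SignType × ZMod 3)) :=
  {x | SunnyTile x.1 x.2.1 x.2.2}

noncomputable def sunnyModel (n : ℤ) : SignType × ZMod 3 := (SignType.sign n, n)

theorem lrValid_sunnyModel : LRValid sunnyTileset sunnyModel := by
  refine ⟨sign_mem_signSteps, fun _ => sign_zero, fun n _ heq => ?_⟩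
  exact absurd (congrArg Prod.snd heq).symm (intCast_add_two_pow_ne_mod_three n _)

theorem sign_eq_of_lrValid_sunnyTileset {τ : ℤ → SignType × ZMod 3}
    (hτ : LRValid sunnyTileset τ) (n : ℤ) : (τ n).1 = SignType.sign n :=
  eq_sign_of_mem_signSteps (s := fun n => (τ n).1) (hτ.2.1 rfl) hτ.1 n

/-- **The sunny-side-up at `0` is sofic on the long range graph**: there are a finite colour
set `B`, a tileset `Θ` and a projection `π : B → {0,1}` (here `{0,1}` is `Bool`) such that
valid `Θ`-tilings exist, and the projections `π ∘ τ` of valid `Θ`-tilings `τ` are exactly the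
indicator function of `{0} ⊆ ℤ`. -/
theorem longrange_sunny_side_up_sofic :
    ∃ (B : Type) (_ : Fintype B) (Θ : Set (B × LRLab × B)) (π : B → Bool),
      (∃ τ : ℤ → B, LRValid Θ τ) ∧
      ∀ τ : ℤ → B, LRValid Θ τ → ∀ n : ℤ, (π (τ n) = true ↔ n = 0) := by
  refine ⟨SignType × ZMod 3, inferInstance, sunnyTileset, fun b => decide (b.1 = 0),
    ⟨sunnyModel, lrValid_sunnyModel⟩, fun τ hτ n => ?_⟩
  simp [sign_eq_of_lrValid_sunnyTileset hτ n]
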